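/- For a 2×2 real matrix M = [[a,c],[b,d]] with a > 0, the polynomial a·f_1 + b·h_1 + c·t_1 + d·g_1 = a(1 − 4x_1y_1) + 2b x_1 − 2c y_1 + d, after each of the four substitutions x_1 ↦ ±(1+x), y_1 ↦ ±(1+y), has all coefficients of the same sign if and only if tr(A_4ᵀM) ≥ 0, tr(A_5M) ≥ 0, tr(A_6M) ≥ 0, and tr(A_4M) ≥ 0. -/
import Mathlib

open Matrix MvPolynomial

/-- All coefficients of a polynomial are of the same sign. -/
def SameSign (q : MvPolynomial (Fin 2) ℝ) : Prop :=
  (∀ m, 0 ≤ q.coeff m) ∨ (∀ m, q.coeff m ≤ 0)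


lemma expand (a b c d ε δ : ℝ) :
    (aeval (fun v : Fin 2 => if v = 0 then C ε * (1 + X 0) else C δ * (1 + X 1))
      (C a * (1 - 4 * (X 0 * X 1)) + C b * (2 * X 0) +
          C c * (-2 * X 1) + C d) : MvPolynomial (Fin 2) ℝ) =
    C (a + 2*b*ε - 2*c*δ + d - 4*a*ε*δ) + C (2*b*ε - 4*a*ε*δ) * X 0 +
      C (-2*c*δ - 4*a*ε*δ) * X 1 + C (-(4*a*ε*δ)) * (X 0 * X 1) := by
  simp only [_root_.map_add, _root_.map_mul, _root_.map_sub, _root_.map_one, map_neg,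
    map_ofNat, aeval_C, aeval_X, C_add, C_mul, C_sub, C_neg]
  norm_num
  ring

lemma coeff_eq (p q r s : ℝ) (m : Fin 2 →₀ ℕ) :
    ((C p + C q * X 0 + C r * X 1 + C s * (X 0 * X 1) : MvPolynomial (Fin 2) ℝ)).coeff m =
    (if (0 : Fin 2 →₀ ℕ) = m then p else 0) +
    (if Finsupp.single (0 : Fin 2) 1 = m then q else 0) +
    (if Finsupp.single (1 : Fin 2) 1 = m then r else 0) +
    (if Finsupp.single (0 : Fin 2) 1 + Finsupp.single 1 1 = m then s else 0) := by
  have h3 : (C s * (X 0 * X 1) : MvPolynomial (Fin 2) ℝ) =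
      monomial (Finsupp.single 0 1 + Finsupp.single 1 1) s := by
    rw [← mul_assoc, C_mul_X_eq_monomial]; rw [show (X 1 : MvPolynomial (Fin 2) ℝ) = X 1 ^ 1 from (pow_one _).symm, ← monomial_add_single]
  have h0 : (C p : MvPolynomial (Fin 2) ℝ) = monomial 0 p := C_apply
  rw [h3, C_mul_X_eq_monomial, C_mul_X_eq_monomial, h0]
  simp [coeff_add, coeff_monomial]

lemma e1 : Finsupp.single (0:Fin 2) 1 ≠ (0 : Fin 2 →₀ ℕ) := by simp
lemma e2 : Finsupp.single (1:Fin 2) 1 ≠ (0 : Fin 2 →₀ ℕ) := by simp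
lemma e3 : Finsupp.single (0:Fin 2) 1 + Finsupp.single 1 1 ≠ (0 : Fin 2 →₀ ℕ) := by
  intro h; have := DFunLike.congr_fun h 0; simp [Finsupp.single_apply] at this
lemma e4 : Finsupp.single (0:Fin 2) 1 ≠ Finsupp.single (1:Fin 2) 1 := by
  intro h; have := DFunLike.congr_fun h 0; simp [Finsupp.single_apply] at this
lemma e5 : Finsupp.single (0:Fin 2) 1 + Finsupp.single 1 1 ≠ Finsupp.single (0:Fin 2) 1 := by
  intro h; have := DFunLike.congr_fun h 1; simp [Finsupp.single_apply] at this
lemma e6 : Finsupp.single (0:Fin 2) 1 + Finsupp.single 1 1 ≠ Finsupp.single (1:Fin 2) 1 := by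
  intro h; have := DFunLike.congr_fun h 0; simp [Finsupp.single_apply] at this

lemma key (p q r s : ℝ) :
    SameSign (C p + C q * X 0 + C r * X 1 + C s * (X 0 * X 1) : MvPolynomial (Fin 2) ℝ) ↔
    ((0 ≤ p ∧ 0 ≤ q ∧ 0 ≤ r ∧ 0 ≤ s) ∨ (p ≤ 0 ∧ q ≤ 0 ∧ r ≤ 0 ∧ s ≤ 0)) := by
  unfold SameSign
  constructor
  · rintro (h | h)
    · left
      have h0 := h 0
      have h1 := h (Finsupp.single 0 1)
      have h2 := h (Finsupp.single 1 1)
      have h3 := h (Finsupp.single 0 1 + Finsupp.single 1 1)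
      rw [coeff_eq] at h0 h1 h2 h3
      simp only [if_pos rfl, e1, e2, e3, e4, e5, e6, Ne, if_neg, not_false_iff,
        e4.symm, if_neg e1, if_neg e2, if_neg e3, if_neg e4, if_neg e5, if_neg e6,
        if_neg e4.symm, if_neg (Ne.symm e1), if_neg (Ne.symm e2), if_neg (Ne.symm e3),
        if_neg (Ne.symm e5), if_neg (Ne.symm e6), if_true, add_zero, zero_add] at h0 h1 h2 h3
      exact ⟨h0, h1, h2, h3⟩
    · right
      have h0 := h 0
      have h1 := h (Finsupp.single 0 1)
      have h2 := h (Finsupp.single 1 1)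
      have h3 := h (Finsupp.single 0 1 + Finsupp.single 1 1)
      rw [coeff_eq] at h0 h1 h2 h3
      simp only [if_pos rfl, if_neg e1, if_neg e2, if_neg e3, if_neg e4,
        if_neg e5, if_neg e6, if_neg e4.symm, if_neg (Ne.symm e1), if_neg (Ne.symm e2),
        if_neg (Ne.symm e3), if_neg (Ne.symm e5), if_neg (Ne.symm e6), if_true,
        add_zero, zero_add] at h0 h1 h2 h3
      exact ⟨h0, h1, h2, h3⟩
  · rintro (⟨hp, hq, hr, hs⟩ | ⟨hp, hq, hr, hs⟩)
    · left; intro m; rw [coeff_eq]; split_ifs <;> simp_all <;> linarith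
    · right; intro m; rw [coeff_eq]; split_ifs <;> simp_all <;> linarith

/-- For M = [[a,c],[b,d]] with a > 0, the polynomial a·f₁ + b·h₁ + c·t₁ + d·g₁
has, after each substitution x₁ ↦ ±(1+x), y₁ ↦ ±(1+y), all coefficients of the
same sign iff the traces tr(A₄ᵀM), tr(A₅M), tr(A₆M), tr(A₄M) are all nonnegative. -/
theorem stmt_13 (M : Matrix (Fin 2) (Fin 2) ℝ) (ha : 0 < M 0 0) :
    (∀ ε δ : ℝ, (ε = 1 ∨ ε = -1) → (δ = 1 ∨ δ = -1) →
      SameSign (aeval (fun v : Fin 2 => if v = 0 then C ε * (1 + X 0) else C δ * (1 + X 1))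
        (C (M 0 0) * (1 - 4 * (X 0 * X 1)) + C (M 1 0) * (2 * X 0) +
          C (M 0 1) * (-2 * X 1) + C (M 1 1)))) ↔
    (0 ≤ Matrix.trace ((!![3, -2; 2, -1] : Matrix (Fin 2) (Fin 2) ℝ) * M) ∧
     0 ≤ Matrix.trace ((!![5, 2; 2, 1] : Matrix (Fin 2) (Fin 2) ℝ) * M) ∧
     0 ≤ Matrix.trace ((!![5, -2; -2, 1] : Matrix (Fin 2) (Fin 2) ℝ) * M) ∧
     0 ≤ Matrix.trace ((!![3, 2; -2, -1] : Matrix (Fin 2) (Fin 2) ℝ) * M)) := by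
  set a := M 0 0
  set b := M 1 0
  set c := M 0 1
  set d := M 1 1
  have hiff : ∀ ε δ : ℝ,
      SameSign (aeval (fun v : Fin 2 => if v = 0 then C ε * (1 + X 0) else C δ * (1 + X 1))
        (C a * (1 - 4 * (X 0 * X 1)) + C b * (2 * X 0) + C c * (-2 * X 1) + C d)) ↔
      ((0 ≤ a + 2*b*ε - 2*c*δ + d - 4*a*ε*δ ∧ 0 ≤ 2*b*ε - 4*a*ε*δ ∧
        0 ≤ -2*c*δ - 4*a*ε*δ ∧ 0 ≤ -(4*a*ε*δ)) ∨
       (a + 2*b*ε - 2*c*δ + d - 4*a*ε*δ ≤ 0 ∧ 2*b*ε - 4*a*ε*δ ≤ 0 ∧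
        -2*c*δ - 4*a*ε*δ ≤ 0 ∧ -(4*a*ε*δ) ≤ 0)) := by
    intro ε δ; rw [expand, key]
  have htr : Matrix.trace ((!![3, -2; 2, -1] : Matrix (Fin 2) (Fin 2) ℝ) * M) = 3*a - 2*b + 2*c - d ∧
      Matrix.trace ((!![5, 2; 2, 1] : Matrix (Fin 2) (Fin 2) ℝ) * M) = 5*a + 2*b + 2*c + d ∧
      Matrix.trace ((!![5, -2; -2, 1] : Matrix (Fin 2) (Fin 2) ℝ) * M) = 5*a - 2*b - 2*c + d ∧
      Matrix.trace ((!![3, 2; -2, -1] : Matrix (Fin 2) (Fin 2) ℝ) * M) = 3*a + 2*b - 2*c - d := by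
    refine ⟨?_, ?_, ?_, ?_⟩ <;>
      simp [Matrix.trace_fin_two, Matrix.mul_apply, Matrix.vecMul, dotProduct, Fin.sum_univ_two, a, b, c, d] <;> ring
  obtain ⟨t1, t2, t3, t4⟩ := htr
  rw [t1, t2, t3, t4]
  constructor
  · intro h
    have h11 := (hiff 1 1).mp (h 1 1 (Or.inl rfl) (Or.inl rfl))
    have h1m := (hiff 1 (-1)).mp (h 1 (-1) (Or.inl rfl) (Or.inr rfl))
    have hm1 := (hiff (-1) 1).mp (h (-1) 1 (Or.inr rfl) (Or.inl rfl))
    have hmm := (hiff (-1) (-1)).mp (h (-1) (-1) (Or.inr rfl) (Or.inr rfl))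
    rcases h11 with ⟨_, _, _, h⟩ | ⟨h11, _, _, _⟩
    · linarith
    rcases h1m with ⟨h1m, _, _, _⟩ | ⟨_, _, _, h⟩
    swap
    · linarith
    rcases hm1 with ⟨hm1, _, _, _⟩ | ⟨_, _, _, h⟩
    swap
    · linarith
    rcases hmm with ⟨_, _, _, h⟩ | ⟨hmm, _, _, _⟩
    · linarith
    refine ⟨by linarith, by linarith, by linarith, by linarith⟩
  · rintro ⟨T1, T2, T3, T4⟩ ε δ (rfl | rfl) (rfl | rfl) <;> rw [hiff]
    · right; refine ⟨by linarith, by linarith, by linarith, by linarith⟩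
    · left; refine ⟨by linarith, by linarith, by linarith, by linarith⟩
    · left; refine ⟨by linarith, by linarith, by linarith, by linarith⟩
    · right; refine ⟨by linarith, by linarith, by linarith, by linarith⟩
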